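/- arXiv:1805.00301 — 2 statements merged into one kernel-verified Lean document; each statement's English description precedes it below -/
import Mathlib

section
/- A finite abelian 2-group G satisfies α(G) = 1/2 if and only if G ≅ (Z/2)^n × Z/8 for some n ∈ ℕ. -/
/-!
Each element generates exactly one cyclic subgroup, and a cyclic group of order `d` has
`φ(d)` generators, so `G` has `∑ g, 1 / φ(o(g))` cyclic subgroups. For a `2`-group of
exponent `2 ^ m` this gives `α(G) = ∑_{k=1}^{m} t_k / 2 ^ k + 1 / 2 ^ m`, where `t_k` is the
proportion of elements killed by `2 ^ k`. In an abelian group the image of `x ↦ x ^ 2 ^ k`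
contains an element of order `2 ^ (m - k)`, so `t_k ≤ 2 ^ (k - m)` and
`α(G) ≤ (m + 1) / 2 ^ m`; hence `α(G) = 1 / 2` forces `m = 3` and `t_1 = 1 / 4`. Writing `G`
as a product of cyclic groups, this says that every factor has order dividing `8`, one of them
has order `8`, and there are `log₂ |G| - 2` factors, so all the others have order `2`.
-/

/-- `α(G) = |L₁(G)| / |G|`, where `L₁(G)` is the set of cyclic subgroups of `G`. -/
noncomputable def alpha (G : Type*) [Group G] : ℚ :=
  (Nat.card {H : Subgroup G // IsCyclic H} : ℚ) / (Nat.card G : ℚ)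

open Finset Subgroup

section CyclicSubgroups

variable {G : Type*} [Group G]

theorem zpowers_eq_iff_mem_and_orderOf_eq [Finite G] {H : Subgroup G} {g : G} :
    zpowers g = H ↔ g ∈ H ∧ orderOf g = Nat.card H := by
  refine ⟨fun h => h ▸ ⟨mem_zpowers g, (Nat.card_zpowers g).symm⟩,
    fun ⟨hg, hord⟩ => ?_⟩
  exact eq_of_le_of_card_ge (zpowers_le.mpr hg) (by rw [← hord, Nat.card_zpowers])

open scoped Classical in
theorem card_filter_zpowers_eq_totient [Fintype G] (H : Subgroup G) [IsCyclic H] :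
    #{g | zpowers g = H} = (Nat.card H).totient := by
  rw [Nat.card_eq_fintype_card, ← IsCyclic.card_orderOf_eq_totient dvd_rfl]
  refine card_bij'
    (fun g hg => ⟨g, (zpowers_eq_iff_mem_and_orderOf_eq.mp (mem_filter.mp hg).2).1⟩)
    (fun h _ => (h : G)) ?_ ?_ (fun _ _ => rfl) (fun _ _ => rfl)
  · intro g hg
    simp only [mem_filter, mem_univ, true_and] at hg ⊢
    rw [Subgroup.orderOf_mk, (zpowers_eq_iff_mem_and_orderOf_eq.mp hg).2,
      Nat.card_eq_fintype_card]
  · intro h hh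
    simp only [mem_filter, mem_univ, true_and] at hh ⊢
    rw [zpowers_eq_iff_mem_and_orderOf_eq, Subgroup.orderOf_coe, hh, Nat.card_eq_fintype_card]
    exact ⟨h.2, rfl⟩

theorem card_isCyclic_subgroup_eq_sum_one_div_totient [Fintype G] :
    (Nat.card {H : Subgroup G // IsCyclic H} : ℚ) =
      ∑ g : G, 1 / ((orderOf g).totient : ℚ) := by
  classical
  let gen : G → {H : Subgroup G // IsCyclic H} := fun g => ⟨zpowers g, inferInstance⟩
  rw [← sum_fiberwise univ gen, Nat.card_eq_fintype_card, ← card_univ, card_eq_sum_ones,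
    Nat.cast_sum]
  refine sum_congr rfl fun ⟨H, hH⟩ _ => ?_
  have hfiber : (univ.filter fun g => gen g = ⟨H, hH⟩) = univ.filter (zpowers · = H) := by
    ext g; simp [gen, Subtype.ext_iff]
  have horder : ∀ g ∈ ({g | zpowers g = H} : Finset G), orderOf g = Nat.card H := fun g hg =>
    (zpowers_eq_iff_mem_and_orderOf_eq.mp (mem_filter.mp hg).2).2
  rw [hfiber, sum_congr rfl fun g hg => by rw [horder g hg], sum_const,
    card_filter_zpowers_eq_totient H, nsmul_eq_mul, Nat.cast_one, mul_one_div_cancel]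
  exact_mod_cast (Nat.totient_pos.mpr Nat.card_pos).ne'

end CyclicSubgroups

theorem sum_Ico_one_div_two_pow {a K : ℕ} (h : a ≤ K) :
    ∑ k ∈ Ico a K, (1 : ℚ) / 2 ^ k = 2 / 2 ^ a - 2 / 2 ^ K := by
  induction K, h using Nat.le_induction with
  | base => simp
  | succ K hK ih => rw [sum_Ico_succ_top hK, ih]; field_simp; ring

theorem one_div_totient_eq_sum_of_dvd_two_pow {d K : ℕ} (hK : 1 ≤ K) (hd : d ∣ 2 ^ K) :
    (1 : ℚ) / d.totient =
      ∑ k ∈ Ico 1 K, (if d ∣ 2 ^ k then 1 else 0) / 2 ^ k + 2 / 2 ^ K := by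
  obtain ⟨j, hjK, rfl⟩ := (Nat.dvd_prime_pow Nat.prime_two).mp hd
  have hfilter : ({k ∈ Ico 1 K | 2 ^ j ∣ 2 ^ k} : Finset ℕ) = Ico (max 1 j) K := by
    ext k
    simp only [mem_filter, mem_Ico, Nat.pow_dvd_pow_iff_le_right (by norm_num : 1 < 2)]
    omega
  simp only [ite_div, zero_div]
  rw [← sum_filter, hfilter, sum_Ico_one_div_two_pow (by omega), sub_add_cancel]
  rcases j with _ | j
  · simp
  · rw [Nat.totient_prime_pow_succ Nat.prime_two]; field_simp; simp [pow_succ]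

theorem card_isCyclic_subgroup_eq_sum_card_pow_eq_one {G : Type*} [Group G] [Fintype G] {K : ℕ}
    (hK : 1 ≤ K) (hG : ∀ g : G, g ^ 2 ^ K = 1) :
    (Nat.card {H : Subgroup G // IsCyclic H} : ℚ) =
      ∑ k ∈ Ico 1 K, (Nat.card {g : G // g ^ 2 ^ k = 1} : ℚ) / 2 ^ k +
        2 * Nat.card G / 2 ^ K := by
  classical
  rw [card_isCyclic_subgroup_eq_sum_one_div_totient, sum_congr rfl fun g _ =>
      one_div_totient_eq_sum_of_dvd_two_pow hK (orderOf_dvd_of_pow_eq_one (hG g)),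
    sum_add_distrib, sum_comm, sum_const, card_univ, nsmul_eq_mul, Nat.card_eq_fintype_card,
    mul_div_assoc]
  congr 1
  · refine sum_congr rfl fun k _ => ?_
    simp_rw [← sum_div, sum_boole, orderOf_dvd_iff_pow_eq_one, Nat.card_eq_fintype_card,
      Fintype.card_subtype]
  · ring

theorem alpha_eq_sum_card_pow_eq_one {G : Type*} [Group G] [Finite G] {K : ℕ} (hK : 1 ≤ K)
    (hG : ∀ g : G, g ^ 2 ^ K = 1) :
    alpha G = ∑ k ∈ Ico 1 K, (Nat.card {g : G // g ^ 2 ^ k = 1} / Nat.card G : ℚ) / 2 ^ k +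
      2 / 2 ^ K := by
  have := Fintype.ofFinite G
  have hG0 : (Nat.card G : ℚ) ≠ 0 := by exact_mod_cast Nat.card_pos.ne'
  rw [alpha, card_isCyclic_subgroup_eq_sum_card_pow_eq_one hK hG, add_div, sum_div]
  congr 1
  · exact sum_congr rfl fun k _ => div_right_comm _ _ _
  · field_simp

theorem alpha_congr {G G' : Type*} [Group G] [Group G'] (e : G ≃* G') : alpha G = alpha G' := by
  have hcyc : Nat.card {H : Subgroup G // IsCyclic H} = Nat.card {H : Subgroup G' // IsCyclic H} :=
    Nat.card_congr (e.mapSubgroup.toEquiv.subtypeEquiv fun H => (e.subgroupMap H).isCyclic)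
  rw [alpha, alpha, hcyc, Nat.card_congr e.toEquiv]

theorem card_pow_eq_one_mul_orderOf_pow_le {G : Type*} [CommGroup G] [Finite G] (n : ℕ) (g : G) :
    Nat.card {x : G // x ^ n = 1} * orderOf (g ^ n) ≤ Nat.card G := by
  let f : G →* G := powMonoidHom n
  have hker : Nat.card {x : G // x ^ n = 1} = Nat.card f.ker := rfl
  rw [hker, ← f.ker.card_mul_index, Subgroup.index_ker, ← Nat.card_zpowers]
  exact Nat.mul_le_mul_left _ (Subgroup.card_le_of_le (zpowers_le.mpr ⟨g, rfl⟩))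

theorem card_pow_eq_one_mul_exponent_le {G : Type*} [CommGroup G] [Finite G] {d : ℕ}
    (hd : d ∣ Monoid.exponent G) :
    Nat.card {x : G // x ^ d = 1} * Monoid.exponent G ≤ d * Nat.card G := by
  obtain ⟨g, hg⟩ := Monoid.exists_orderOf_eq_exponent (Monoid.ExponentExists.of_finite (G := G))
  have hd0 : d ≠ 0 := by rintro rfl; exact Monoid.exponent_ne_zero_of_finite (zero_dvd_iff.mp hd)
  have hord : orderOf (g ^ d) * d = Monoid.exponent G := by
    rw [orderOf_pow_of_dvd hd0 (hg ▸ hd), hg, Nat.div_mul_cancel hd]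
  calc Nat.card {x : G // x ^ d = 1} * Monoid.exponent G
      = Nat.card {x : G // x ^ d = 1} * orderOf (g ^ d) * d := by rw [← hord, mul_assoc]
    _ ≤ Nat.card G * d := Nat.mul_le_mul_right d (card_pow_eq_one_mul_orderOf_pow_le d g)
    _ = d * Nat.card G := mul_comm _ _

theorem card_pow_eq_one_congr {G G' : Type*} [Group G] [Group G'] (e : G ≃* G') (n : ℕ) :
    Nat.card {g : G // g ^ n = 1} = Nat.card {g : G' // g ^ n = 1} :=
  Nat.card_congr (e.toEquiv.subtypeEquiv fun g => by simp [← map_pow])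

theorem card_pow_eq_one_pi {ι : Type*} [Fintype ι] (G : ι → Type*) [∀ i, Group (G i)]
    (n : ℕ) :
    Nat.card {g : ∀ i, G i // g ^ n = 1} = ∏ i, Nat.card {x : G i // x ^ n = 1} := by
  rw [← Nat.card_pi]
  exact Nat.card_congr ((Equiv.subtypeEquivRight fun g => by simp [funext_iff]).trans
    Equiv.subtypePiEquivPi)

theorem card_pow_eq_one_prod (G H : Type*) [Group G] [Group H] (n : ℕ) :
    Nat.card {g : G × H // g ^ n = 1} =
      Nat.card {x : G // x ^ n = 1} * Nat.card {y : H // y ^ n = 1} := by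
  rw [← Nat.card_prod]
  exact Nat.card_congr ((Equiv.subtypeEquivRight fun g => by simp [Prod.ext_iff]).trans
    Equiv.subtypeProdEquivProd)

theorem card_pow_eq_one_multiplicative_zmod (n m : ℕ) [NeZero n] :
    Nat.card {x : Multiplicative (ZMod n) // x ^ m = 1} = n.gcd m := by
  have h := IsCyclic.card_powMonoidHom_ker (Multiplicative (ZMod n)) m
  rwa [Nat.card_congr Multiplicative.toAdd, Nat.card_zmod] at h

theorem two_mul_add_two_lt_two_pow {m : ℕ} (hm : 4 ≤ m) : 2 * m + 2 < 2 ^ m := by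
  induction m, hm using Nat.le_induction with
  | base => norm_num
  | succ m _ ih => rw [pow_succ]; omega

theorem eq_three_of_sum_div_two_pow_eq_half {m : ℕ} {t : ℕ → ℚ} (hpos : 0 < t 1)
    (hle : ∀ k ≤ m, 2 ^ m * t k ≤ 2 ^ k) (htop : t m = 1)
    (h : ∑ k ∈ Ico 1 (m + 1), t k / 2 ^ k + 2 / 2 ^ (m + 1) = 1 / 2) :
    m = 3 ∧ t 1 = 1 / 4 := by
  rcases lt_or_ge m 4 with hm | hm
  · have h1 := hle 1
    have h2 := hle 2
    interval_cases m <;> simp [sum_Ico_succ_top, htop] at h h1 h2 ⊢ <;> nlinarith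
  · exfalso
    have hterm : ∀ k ∈ Ico 1 (m + 1), t k / 2 ^ k ≤ 1 / 2 ^ m := fun k hk => by
      have := hle k (by simp at hk; omega)
      rw [div_le_div_iff₀ (by positivity) (by positivity)]
      linarith
    have hsum : ∑ k ∈ Ico 1 (m + 1), t k / 2 ^ k ≤ m * (1 / 2 ^ m) := by
      simpa using sum_le_sum hterm
    have htail : (2 : ℚ) / 2 ^ (m + 1) = 1 / 2 ^ m := by rw [pow_succ]; field_simp
    have hbound : (1 : ℚ) / 2 ≤ (m + 1) * (1 / 2 ^ m) := by linarith
    have hpow : ((2 * m + 2 : ℕ) : ℚ) < 2 ^ m := by exact_mod_cast two_mul_add_two_lt_two_pow hm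
    field_simp at hbound
    push_cast at hpow
    linarith

theorem exponent_eq_eight_of_alpha_eq_half {G : Type*} [CommGroup G] [Finite G]
    (hG : IsPGroup 2 G) (h : alpha G = 1 / 2) :
    Monoid.exponent G = 8 ∧ 4 * Nat.card {g : G // g ^ 2 = 1} = Nat.card G := by
  obtain ⟨N, hN⟩ := hG.exists_card_eq
  obtain ⟨m, -, hm⟩ := (Nat.dvd_prime_pow Nat.prime_two).mp (hN ▸ Group.exponent_dvd_nat_card)
  have hpow : ∀ x : G, x ^ 2 ^ m = 1 := fun x => hm ▸ Monoid.pow_exponent_eq_one x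
  set t : ℕ → ℚ := fun k => Nat.card {x : G // x ^ 2 ^ k = 1} / Nat.card G with ht
  have hG0 : (0 : ℚ) < Nat.card G := by exact_mod_cast Nat.card_pos
  have hpos : 0 < t 1 := by
    have : Nonempty {x : G // x ^ 2 ^ 1 = 1} := ⟨⟨1, one_pow _⟩⟩
    exact div_pos (by exact_mod_cast Nat.card_pos) hG0
  have hle : ∀ k ≤ m, 2 ^ m * t k ≤ 2 ^ k := fun k hk => by
    have hcard : (Nat.card {x : G // x ^ 2 ^ k = 1} * 2 ^ m : ℚ) ≤ 2 ^ k * Nat.card G := by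
      exact_mod_cast hm ▸ card_pow_eq_one_mul_exponent_le (hm ▸ pow_dvd_pow 2 hk)
    simp only [ht]
    rw [mul_div_assoc', div_le_iff₀ hG0]
    linarith
  have htop : t m = 1 := by
    simp only [ht]
    rw [Nat.card_congr (Equiv.subtypeUnivEquiv hpow), div_self hG0.ne']
  -- `K = m + 1` rather than `K = m`, so that the trivial group (`m = 0`) is no special case.
  have hsum := alpha_eq_sum_card_pow_eq_one (G := G) (K := m + 1) (by omega)
    fun x => by rw [pow_succ, pow_mul, hpow, one_pow]
  obtain ⟨rfl, h1⟩ := eq_three_of_sum_div_two_pow_eq_half hpos hle htop (hsum ▸ h)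
  refine ⟨hm, ?_⟩
  simp only [ht, pow_one] at h1
  rw [div_eq_iff hG0.ne'] at h1
  exact_mod_cast (by linarith : (4 * Nat.card {x : G // x ^ 2 = 1} : ℚ) = Nat.card G)

theorem eq_two_of_prod_eq_two_pow_card {ι : Type*} {s : Finset ι} {f : ι → ℕ}
    (hf : ∀ i ∈ s, 2 ≤ f i) (hprod : ∏ i ∈ s, f i = 2 ^ #s) : ∀ i ∈ s, f i = 2 := by
  by_contra! ⟨j, hj, hfj⟩
  have hlt : ∏ _i ∈ s, 2 < ∏ i ∈ s, f i :=
    prod_lt_prod (fun _ _ => two_pos) hf ⟨j, hj, lt_of_le_of_ne (hf j hj) (Ne.symm hfj)⟩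
  rw [prod_const, hprod] at hlt
  exact lt_irrefl _ hlt

theorem exists_mulEquiv_of_eq_eight_of_eq_two {ι : Type*} [Fintype ι] [DecidableEq ι]
    {c : ι → ℕ} {i₀ : ι} (h₀ : c i₀ = 8) (hc : ∀ i ≠ i₀, c i = 2) :
    ∃ n : ℕ, Nonempty ((∀ i, Multiplicative (ZMod (c i))) ≃*
      Multiplicative ((Fin n → ZMod 2) × ZMod 8)) := by
  let split : (∀ i, ZMod (c i)) ≃+ ZMod (c i₀) × ∀ j : {j // j ≠ i₀}, ZMod (c j) :=
    { Equiv.piSplitAt i₀ fun i => ZMod (c i) with map_add' := fun _ _ => rfl }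
  let rest : (∀ j : {j // j ≠ i₀}, ZMod (c j)) ≃+
      (Fin (Fintype.card {j // j ≠ i₀}) → ZMod 2) :=
    (AddEquiv.piCongrRight fun j : {j // j ≠ i₀} =>
      (ZMod.ringEquivCongr (hc j j.2)).toAddEquiv).trans
        (AddEquiv.arrowCongr (Fintype.equivFin _) (AddEquiv.refl _))
  let e : (∀ i, ZMod (c i)) ≃+ (Fin (Fintype.card {j // j ≠ i₀}) → ZMod 2) × ZMod 8 :=
    split.trans (((ZMod.ringEquivCongr h₀).toAddEquiv.prodCongr rest).trans AddEquiv.prodComm)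
  exact ⟨_, ⟨(MulEquiv.piMultiplicative _).symm.trans (AddEquiv.toMultiplicative e)⟩⟩

theorem exists_mulEquiv_of_exponent_eq_eight {G : Type*} [CommGroup G] [Finite G]
    (hexp : Monoid.exponent G = 8) (h2 : 4 * Nat.card {g : G // g ^ 2 = 1} = Nat.card G) :
    ∃ n : ℕ, Nonempty (G ≃* Multiplicative ((Fin n → ZMod 2) × ZMod 8)) := by
  classical
  obtain ⟨ι, _, c, hc, ⟨e⟩⟩ := CommGroup.equiv_prod_multiplicative_zmod_of_finite G
  have : ∀ i, NeZero (c i) := fun i => ⟨by have := hc i; omega⟩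
  have hlcm : univ.lcm c = 8 := by
    rw [← hexp, Monoid.exponent_eq_of_mulEquiv e, Monoid.exponent_pi]
    simp [ZMod.exponent]
  have hcases : ∀ i, c i = 2 ∨ c i = 4 ∨ c i = 8 := fun i => by
    have h := Nat.mem_divisors.mpr ⟨hlcm ▸ dvd_lcm (mem_univ i), by norm_num⟩
    rw [show Nat.divisors 8 = {1, 2, 4, 8} by decide] at h
    simp only [mem_insert, mem_singleton] at h
    have := hc i
    omega
  obtain ⟨i₀, hi₀⟩ : ∃ i₀, c i₀ = 8 := by
    by_contra! hne
    have h4 : univ.lcm c ∣ 4 := lcm_dvd fun i _ => by rcases hcases i with h | h | h <;> simp_all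
    rw [hlcm] at h4
    norm_num at h4
  have hcard2 : Nat.card {g : G // g ^ 2 = 1} = 2 ^ Fintype.card ι := by
    rw [card_pow_eq_one_congr e, card_pow_eq_one_pi]
    simp_rw [card_pow_eq_one_multiplicative_zmod]
    rw [prod_congr rfl fun i _ => Nat.gcd_eq_right (by rcases hcases i with h | h | h <;> simp [h]),
      prod_const, card_univ]
  have hcardG : Nat.card G = c i₀ * ∏ i ∈ univ.erase i₀, c i := by
    rw [mul_prod_erase univ c (mem_univ i₀), Nat.card_congr e.toEquiv, Nat.card_pi]
    simp
  have hprod : ∏ i ∈ univ.erase i₀, c i = 2 ^ #(univ.erase i₀) := by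
    rw [hi₀, ← h2, hcard2] at hcardG
    rw [card_erase_of_mem (mem_univ _), card_univ]
    have hι : 1 ≤ Fintype.card ι := Fintype.card_pos_iff.mpr ⟨i₀⟩
    have : 2 ^ Fintype.card ι = 2 * 2 ^ (Fintype.card ι - 1) := by
      rw [← pow_succ']; congr 1; omega
    omega
  have hrest : ∀ i ≠ i₀, c i = 2 := fun i hi =>
    eq_two_of_prod_eq_two_pow_card (fun i _ => hc i) hprod i (mem_erase.mpr ⟨hi, mem_univ i⟩)
  obtain ⟨n, ⟨e'⟩⟩ := exists_mulEquiv_of_eq_eight_of_eq_two hi₀ hrest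
  exact ⟨n, ⟨e.trans e'⟩⟩

theorem alpha_multiplicative_pi_zmod_two_prod_zmod_eight (n : ℕ) :
    alpha (Multiplicative ((Fin n → ZMod 2) × ZMod 8)) = 1 / 2 := by
  set M := Multiplicative ((Fin n → ZMod 2) × ZMod 8)
  have hT : ∀ m, Nat.card {g : M // g ^ m = 1} = Nat.gcd 2 m ^ n * Nat.gcd 8 m := fun m => by
    rw [card_pow_eq_one_congr (MulEquiv.prodMultiplicative _ _), card_pow_eq_one_prod,
      card_pow_eq_one_congr (MulEquiv.piMultiplicative _), card_pow_eq_one_pi]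
    simp only [card_pow_eq_one_multiplicative_zmod, prod_const, card_univ, Fintype.card_fin]
  have hM : Nat.card M = 2 ^ n * 8 := by
    rw [Nat.card_congr Multiplicative.toAdd, Nat.card_prod, Nat.card_pi]
    simp only [Nat.card_zmod, prod_const, card_univ, Fintype.card_fin]
  have h2 : ∀ x : ZMod 2, 8 • x = 0 := by decide
  have h8 : ∀ y : ZMod 8, 8 • y = 0 := by decide
  have hexp : ∀ g : M, g ^ 2 ^ 3 = 1 := fun g => by
    apply Multiplicative.toAdd.injective
    rw [toAdd_pow, toAdd_one]
    ext
    · exact h2 _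
    · exact h8 _
  rw [alpha_eq_sum_card_pow_eq_one (by norm_num) hexp, show Ico 1 3 = {1, 2} by decide,
    sum_pair (by norm_num), hT, hT, hM]
  norm_num
  field_simp
  ring

theorem stmt_16 (G : Type*) [CommGroup G] [Finite G] (h2 : IsPGroup 2 G) :
    alpha G = 1 / 2 ↔
      ∃ n : ℕ, Nonempty (G ≃* Multiplicative ((Fin n → ZMod 2) × ZMod 8)) := by
  refine ⟨fun h => ?_, fun ⟨n, ⟨e⟩⟩ => ?_⟩
  · obtain ⟨hexp, hcard⟩ := exponent_eq_eight_of_alpha_eq_half h2 h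
    exact exists_mulEquiv_of_exponent_eq_eight hexp hcard
  · rw [alpha_congr e, alpha_multiplicative_pi_zmod_two_prod_zmod_eight]
end

section
/- For a finite abelian group G, the number of cyclic subgroups of the generalized dihedral group D(G) equals |L1(G)| + |G|. -/
/-!
Every element `h` outside `G` has the form `g * y` with `g ∈ G`, hence is an involution:
`(g * y) * (g * y) = g * (y * g * y) = g * g⁻¹ = 1`. So a cyclic subgroup not contained in `G`
is `{1, h}` for a unique `h ∉ G`, and there are as many such `h` as elements of the coset `G * y`.
The cyclic subgroups contained in `G` are the cyclic subgroups of `G`.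
-/

open Function Subgroup

theorem Nat.card_subtype_eq_card_and_add_card_and_not {α : Type*} [Finite α] (p q : α → Prop) :
    Nat.card {x // p x} = Nat.card {x // p x ∧ q x} + Nat.card {x // p x ∧ ¬q x} := by
  classical
  rw [← Nat.card_sum]
  exact Nat.card_congr <| (Equiv.sumCompl fun x : {x // p x} => q x).symm.trans <|
    (Equiv.subtypeSubtypeEquivSubtypeInter p q).sumCongr
      (Equiv.subtypeSubtypeEquivSubtypeInter p fun x => ¬q x)

namespace Subgroup

variable {H : Type*} [Group H]

theorem isCyclic_map_iff {N : Type*} [Group N] {f : H →* N} (hf : Injective f)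
    (K : Subgroup H) : IsCyclic (K.map f) ↔ IsCyclic K :=
  (K.equivMapOfInjective f hf).isCyclic.symm

theorem card_isCyclic_and_le_eq (G : Subgroup H) :
    Nat.card {K : Subgroup H // IsCyclic K ∧ K ≤ G} = Nat.card {K : Subgroup G // IsCyclic K} :=
  Nat.card_congr <| (Equiv.subtypeEquivRight fun _ => and_comm).trans <|
    (Equiv.subtypeSubtypeEquivSubtypeInter (· ≤ G) (IsCyclic ·)).symm.trans
    ((MapSubtype.orderIso G).toEquiv.subtypeEquiv fun K =>
      (isCyclic_map_iff G.subtype_injective K).symm).symm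

theorem mem_zpowers_iff_of_mul_self_eq_one {g x : H} (hg : g * g = 1) :
    x ∈ zpowers g ↔ x = 1 ∨ x = g := by
  refine ⟨fun hx => ?_, by rintro (rfl | rfl) <;> simp⟩
  obtain ⟨n, rfl⟩ := mem_zpowers_iff.mp hx
  rcases Int.even_or_odd' n with ⟨k, rfl | rfl⟩
  · left
    rw [zpow_mul, zpow_two, hg, one_zpow]
  · right
    rw [zpow_add_one, zpow_mul, zpow_two, hg, one_zpow, one_mul]

theorem card_isCyclic_and_not_le_eq {G : Subgroup H} (hinv : ∀ h ∉ G, h * h = 1) :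
    Nat.card {K : Subgroup H // IsCyclic K ∧ ¬K ≤ G} = Nat.card {h : H // h ∉ G} := by
  symm
  refine Nat.card_eq_of_bijective
    (fun h => ⟨zpowers h.1, inferInstance, fun hle => h.2 (zpowers_le.mp hle)⟩) ⟨?_, ?_⟩
  · rintro ⟨h, hh⟩ ⟨h', hh'⟩ heq
    have hmem : h' ∈ zpowers h := by
      have hK : zpowers h = zpowers h' := congrArg Subtype.val heq
      exact hK ▸ mem_zpowers h'
    rcases (mem_zpowers_iff_of_mul_self_eq_one (hinv h hh)).mp hmem with rfl | rfl
    · exact absurd G.one_mem hh'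
    · rfl
  · rintro ⟨K, hK, hKG⟩
    obtain ⟨h, rfl⟩ := (K.isCyclic_iff_exists_zpowers_eq_top).mp hK
    exact ⟨⟨h, fun hh => hKG (zpowers_le.mpr hh)⟩, rfl⟩

theorem card_compl_eq_card_of_index_eq_two {G : Subgroup H} (hG : G.index = 2) {y : H}
    (hy : y ∉ G) : Nat.card {h : H // h ∉ G} = Nat.card G :=
  Nat.card_congr <| (Equiv.mulRight y).subtypeEquiv fun h => by
    simp [mul_mem_iff_of_index_two hG, hy]

theorem mul_self_eq_one_of_notMem_of_index_eq_two {G : Subgroup H} (hG : G.index = 2) {y : H}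
    (hyG : y ∉ G) (hy2 : y ^ 2 = 1) (hconj : ∀ g ∈ G, y * g * y = g⁻¹) {h : H} (hh : h ∉ G) :
    h * h = 1 := by
  have hg : h * y ∈ G := by simp [mul_mem_iff_of_index_two hG, hh, hyG]
  have hy : y * y = 1 := by rw [← sq, hy2]
  calc h * h = (h * y) * (y * (h * y) * y) := by
        simp only [mul_assoc, hy, mul_one]
        rw [← mul_assoc y y h, hy, one_mul]
    _ = 1 := by rw [hconj _ hg, mul_inv_cancel]

end Subgroup

theorem stmt_17_general (H : Type*) [Group H] [Finite H] (G : Subgroup H)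
    (hGindex : G.index = 2) (y : H) (hyG : y ∉ G)
    (hy2 : y ^ 2 = 1) (hconj : ∀ g ∈ G, y * g * y = g⁻¹) :
    Nat.card {K : Subgroup H // IsCyclic K} =
      Nat.card {K : Subgroup G // IsCyclic K} + Nat.card G := by
  rw [Nat.card_subtype_eq_card_and_add_card_and_not (fun K : Subgroup H => IsCyclic K) (· ≤ G),
    card_isCyclic_and_le_eq,
    card_isCyclic_and_not_le_eq
      (fun _ => mul_self_eq_one_of_notMem_of_index_eq_two hGindex hyG hy2 hconj),
    card_compl_eq_card_of_index_eq_two hGindex hyG]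

/-- `H` is the generalized dihedral group `D(G)`: `G` is an abelian subgroup of index 2
and `y ∉ G` is an involution inverting `G` by conjugation. -/
theorem stmt_17 (H : Type*) [Group H] [Finite H] (G : Subgroup H)
    (hG : IsMulCommutative G) (hGindex : G.index = 2) (y : H) (hyG : y ∉ G)
    (hy2 : y ^ 2 = 1) (hconj : ∀ g ∈ G, y * g * y = g⁻¹) :
    Nat.card {K : Subgroup H // IsCyclic K} =
      Nat.card {K : Subgroup G // IsCyclic K} + Nat.card G :=
  stmt_17_general H G hGindex y hyG hy2 hconj
end
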